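/- arXiv:1601.06264 — 3 statements merged into one kernel-verified Lean document; each statement's English description precedes it below -/
import Mathlib

section
/- Let P ∈ ℂ[X₁,…,Xₙ] and let Λ : ℂ[X₁,…,Xₙ] → ℂ be a positive definite linear functional. Then Λ vanishes on the ideal (P) generated by P if and only if Λ vanishes on the ideal (P*P) generated by P*P. -/
open MeasureTheory
open scoped ComplexOrder

noncomputable def evalC {n : ℕ} (P : MvPolynomial (Fin n) ℂ) (x : Fin n → ℝ) : ℂ :=
  MvPolynomial.aeval (fun i => (x i : ℂ)) P

noncomputable def starC {n : ℕ} (P : MvPolynomial (Fin n) ℂ) : MvPolynomial (Fin n) ℂ :=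
  MvPolynomial.map (starRingEnd ℂ) P

def IsPosDefC {n : ℕ} (Λ : MvPolynomial (Fin n) ℂ →ₗ[ℂ] ℂ) : Prop :=
  ∀ P : MvPolynomial (Fin n) ℂ, 0 ≤ Λ (starC P * P)

def IsMomentC {n : ℕ} (Λ : MvPolynomial (Fin n) ℂ →ₗ[ℂ] ℂ) : Prop :=
  ∃ μ : Measure (Fin n → ℝ),
    (∀ Q : MvPolynomial (Fin n) ℂ, Integrable (fun x => evalC Q x) μ) ∧
    (∀ Q : MvPolynomial (Fin n) ℂ, Λ Q = ∫ x, evalC Q x ∂μ)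

noncomputable def vanishingIdealC {n : ℕ} (Z : Set (Fin n → ℝ)) :
    Ideal (MvPolynomial (Fin n) ℂ) where
  carrier := {P | ∀ x ∈ Z, evalC P x = 0}
  add_mem' := by
    intro a b ha hb x hx
    simp only [Set.mem_setOf_eq, evalC, map_add] at *
    rw [ha x hx, hb x hx, add_zero]
  zero_mem' := by
    intro x hx
    simp [evalC]
  smul_mem' := by
    intro c a ha x hx
    simp only [Set.mem_setOf_eq, evalC, smul_eq_mul, map_mul] at *
    rw [ha x hx, mul_zero]

def zeroSetC {n : ℕ} (I : Ideal (MvPolynomial (Fin n) ℂ)) : Set (Fin n → ℝ) :=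
  {x | ∀ P ∈ I, evalC P x = 0}

def zSetC {n : ℕ} (P : MvPolynomial (Fin n) ℂ) : Set (Fin n → ℝ) :=
  {x | evalC P x = 0}

def VanishesOnC {n : ℕ} (Λ : MvPolynomial (Fin n) ℂ →ₗ[ℂ] ℂ)
    (I : Ideal (MvPolynomial (Fin n) ℂ)) : Prop :=
  ∀ P ∈ I, Λ P = 0

def nSetC {n : ℕ} (Λ : MvPolynomial (Fin n) ℂ →ₗ[ℂ] ℂ) : Set (MvPolynomial (Fin n) ℂ) :=
  {P | Λ (starC P * P) = 0}

def IsTypeAC {n : ℕ} (P : MvPolynomial (Fin n) ℂ) : Prop :=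
  ∀ Λ : MvPolynomial (Fin n) ℂ →ₗ[ℂ] ℂ,
    IsPosDefC Λ → VanishesOnC Λ (Ideal.span {P}) → IsMomentC Λ

/-! The form `(A, B) ↦ Λ (A* B)` is a positive semidefinite sesquilinear form, so the
Cauchy–Schwarz phenomenon applies: if `Λ (P* P) = 0` then `Λ (A P) = 0` for every `A`, i.e. `Λ`
kills `(P)`. For a form with `B x x = 0`, `B (y + t x) (y + t x) = B y y + t B y x + t̄ B x y` is a
nonnegative affine function of real `t` (and of `t ∈ iℝ`), hence constant, which forces
`B y x = 0` without first proving that the form is Hermitian. -/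

theorem Complex.eq_zero_of_forall_nonneg_add_ofReal_mul {c w : ℂ} (h : ∀ s : ℝ, 0 ≤ c + s * w) :
    w = 0 := by
  simp only [Complex.le_def, Complex.zero_re, Complex.zero_im, Complex.add_re, Complex.add_im,
    Complex.re_ofReal_mul, Complex.im_ofReal_mul] at h
  have him : w.im = 0 := by linarith [(h 0).2, (h 1).2]
  have hre : w.re = 0 := by
    by_contra hre
    have := (h (-(|c.re| + 1) / w.re)).1
    rw [div_mul_cancel₀ _ hre] at this
    linarith [le_abs_self c.re]
  exact Complex.ext hre him

theorem LinearMap.IsNonneg.apply_eq_zero_of_apply_self_eq_zero {M : Type*} [AddCommGroup M]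
    [Module ℂ M] {B : M →ₗ⋆[ℂ] M →ₗ[ℂ] ℂ} (hB : B.IsNonneg) {x : M} (hx : B x x = 0) (y : M) :
    B y x = 0 := by
  have expand (t : ℂ) : B (y + t • x) (y + t • x) = B y y + t * B y x + star t * B x y := by
    simp [hx]
  have hsum : B y x + B x y = 0 := Complex.eq_zero_of_forall_nonneg_add_ofReal_mul fun s ↦
    calc 0 ≤ B (y + (s : ℂ) • x) (y + (s : ℂ) • x) := hB.nonneg _
      _ = B y y + s * (B y x + B x y) := by rw [expand]; simp; ring
  have hdiff : Complex.I * (B y x - B x y) = 0 := Complex.eq_zero_of_forall_nonneg_add_ofReal_mul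
    fun s ↦ calc 0 ≤ B (y + (Complex.I * s) • x) (y + (Complex.I * s) • x) := hB.nonneg _
      _ = B y y + s * (Complex.I * (B y x - B x y)) := by rw [expand]; simp; ring
  have : B y x - B x y = 0 := by simpa using hdiff
  linear_combination (hsum + this) / 2

section

variable {n : ℕ}

theorem starC_starC (Q : MvPolynomial (Fin n) ℂ) : starC (starC Q) = Q := by
  simp [starC, MvPolynomial.map_map, MvPolynomial.map_id]

noncomputable def starCₗ : MvPolynomial (Fin n) ℂ →ₗ⋆[ℂ] MvPolynomial (Fin n) ℂ where
  toFun := starC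
  map_add' := map_add _
  map_smul' c P := by simp [starC, MvPolynomial.smul_eq_C_mul]

noncomputable def starMulForm (Λ : MvPolynomial (Fin n) ℂ →ₗ[ℂ] ℂ) :
    MvPolynomial (Fin n) ℂ →ₗ⋆[ℂ] MvPolynomial (Fin n) ℂ →ₗ[ℂ] ℂ :=
  ((LinearMap.mul ℂ _).compr₂ Λ).comp starCₗ

theorem starMulForm_apply (Λ : MvPolynomial (Fin n) ℂ →ₗ[ℂ] ℂ) (A B : MvPolynomial (Fin n) ℂ) :
    starMulForm Λ A B = Λ (starC A * B) := rfl

theorem IsPosDefC.isNonneg_starMulForm {Λ : MvPolynomial (Fin n) ℂ →ₗ[ℂ] ℂ} (hΛ : IsPosDefC Λ) :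
    (starMulForm Λ).IsNonneg :=
  ⟨hΛ⟩

theorem IsPosDefC.map_mul_eq_zero {Λ : MvPolynomial (Fin n) ℂ →ₗ[ℂ] ℂ} (hΛ : IsPosDefC Λ)
    {P : MvPolynomial (Fin n) ℂ} (hP : Λ (starC P * P) = 0) (A : MvPolynomial (Fin n) ℂ) :
    Λ (A * P) = 0 := by
  simpa only [starMulForm_apply, starC_starC] using
    hΛ.isNonneg_starMulForm.apply_eq_zero_of_apply_self_eq_zero hP (starC A)

theorem vanishesOnC_span_singleton_iff {Λ : MvPolynomial (Fin n) ℂ →ₗ[ℂ] ℂ}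
    {P : MvPolynomial (Fin n) ℂ} : VanishesOnC Λ (Ideal.span {P}) ↔ ∀ A, Λ (A * P) = 0 := by
  simp only [VanishesOnC, Ideal.mem_span_singleton', forall_exists_index, forall_apply_eq_imp_iff]

theorem VanishesOnC.mono {Λ : MvPolynomial (Fin n) ℂ →ₗ[ℂ] ℂ} {I J : Ideal (MvPolynomial (Fin n) ℂ)}
    (hI : VanishesOnC Λ I) (hJI : J ≤ I) : VanishesOnC Λ J :=
  fun P hP ↦ hI P (hJI hP)

end

theorem stmt_14_general (n : ℕ) (P : MvPolynomial (Fin n) ℂ)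
    (Λ : MvPolynomial (Fin n) ℂ →ₗ[ℂ] ℂ) (hΛ : IsPosDefC Λ) :
    VanishesOnC Λ (Ideal.span {P}) ↔ VanishesOnC Λ (Ideal.span {starC P * P}) := by
  refine ⟨fun h ↦ h.mono ?_, fun h ↦ vanishesOnC_span_singleton_iff.2 (hΛ.map_mul_eq_zero ?_)⟩
  · exact Ideal.span_singleton_le_span_singleton.2 (dvd_mul_left P _)
  · exact h _ (Ideal.mem_span_singleton_self _)

theorem stmt_14 (n : ℕ) (hn : 0 < n) (P : MvPolynomial (Fin n) ℂ)
    (Λ : MvPolynomial (Fin n) ℂ →ₗ[ℂ] ℂ) (hΛ : IsPosDefC Λ) :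
    VanishesOnC Λ (Ideal.span {P}) ↔ VanishesOnC Λ (Ideal.span {starC P * P}) :=
  stmt_14_general n P Λ hΛ
end

section
/- Let I be a proper set ideal of ℂ[X₁,…,Xₙ], i.e., a proper ideal of the form I = I_ℂ(Z) for some subset Z of ℝⁿ. Then there exists a moment functional Λ on ℂ[X₁,…,Xₙ] such that N(Λ) = I. -/
open MeasureTheory
open scoped ComplexOrder

/-!
Since `I ≠ ⊤`, the set `Z` is nonempty; choose a sequence `(xₖ)` in `Z` that is dense in `Z`.
The discrete measure `μ = ∑ₖ 2⁻ᵏ e^{-k‖xₖ‖} δ_{xₖ}` integrates every polynomial, and for the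
functional `Λ Q = ∫ Q dμ` we get `Λ (P* P) = ∑ₖ 2⁻ᵏ e^{-k‖xₖ‖} |P(xₖ)|²`. This vanishes iff `P`
vanishes at every `xₖ`, i.e., by continuity and density, iff `P` vanishes on `Z`.
-/

open Filter Set

lemma ae_sum_smul_dirac_iff {ι X : Type*} [Countable ι] [MeasurableSpace X]
    [MeasurableSingletonClass X] {c : ι → ENNReal} (hc : ∀ i, c i ≠ 0) {x : ι → X}
    {p : X → Prop} :
    (∀ᵐ y ∂Measure.sum fun i => c i • Measure.dirac (x i), p y) ↔ ∀ i, p (x i) := by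
  simp only [Measure.ae_sum_iff, Measure.ae_ennreal_smul_measure_iff (hc _), ae_dirac_eq,
    eventually_pure]

lemma exists_range_subset_subset_closure_range {X : Type*} [TopologicalSpace X]
    [TopologicalSpace.PseudoMetrizableSpace X] [TopologicalSpace.SeparableSpace X] {Z : Set X}
    (hZ : Z.Nonempty) : ∃ f : ℕ → X, range f ⊆ Z ∧ Z ⊆ closure (range f) := by
  obtain ⟨t, htZ, htc, hZt⟩ :=
    (TopologicalSpace.IsSeparable.of_separableSpace Z).exists_countable_dense_subset
  obtain ⟨f, rfl⟩ := htc.exists_eq_range (closure_nonempty_iff.1 (hZ.mono hZt))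
  exact ⟨f, htZ, hZt⟩

section

variable {n : ℕ}

@[simp] lemma evalC_C (a : ℂ) (x : Fin n → ℝ) : evalC (MvPolynomial.C a) x = a := by
  simp [evalC]

@[simp] lemma evalC_X (i : Fin n) (x : Fin n → ℝ) : evalC (MvPolynomial.X i) x = x i := by
  simp [evalC]

@[simp] lemma evalC_add (P Q : MvPolynomial (Fin n) ℂ) (x : Fin n → ℝ) :
    evalC (P + Q) x = evalC P x + evalC Q x := by
  simp [evalC]

@[simp] lemma evalC_mul (P Q : MvPolynomial (Fin n) ℂ) (x : Fin n → ℝ) :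
    evalC (P * Q) x = evalC P x * evalC Q x := by
  simp [evalC]

@[simp] lemma evalC_smul (a : ℂ) (P : MvPolynomial (Fin n) ℂ) (x : Fin n → ℝ) :
    evalC (a • P) x = a * evalC P x := by
  simp [evalC]

lemma continuous_evalC (P : MvPolynomial (Fin n) ℂ) : Continuous (evalC P) := by
  have h : evalC P = fun x => MvPolynomial.eval (fun i => (x i : ℂ)) P := rfl
  rw [h]
  exact (MvPolynomial.continuous_eval P).comp (by fun_prop)

lemma evalC_starC (P : MvPolynomial (Fin n) ℂ) (x : Fin n → ℝ) :
    evalC (starC P) x = starRingEnd ℂ (evalC P x) := by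
  induction P using MvPolynomial.induction_on with
  | C a => simp [starC]
  | add P Q hP hQ => simp_all [starC]
  | mul_X P i hP => simp_all [starC]

lemma evalC_starC_mul_self (P : MvPolynomial (Fin n) ℂ) (x : Fin n → ℝ) :
    evalC (starC P * P) x = (Complex.normSq (evalC P x) : ℂ) := by
  rw [evalC_mul, evalC_starC, Complex.normSq_eq_conj_mul_self]

lemma exists_norm_evalC_le_mul_exp (Q : MvPolynomial (Fin n) ℂ) :
    ∃ (C : ℝ) (m : ℕ), 0 ≤ C ∧ ∀ x, ‖evalC Q x‖ ≤ C * Real.exp (m * ‖x‖) := by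
  induction Q using MvPolynomial.induction_on with
  | C a => exact ⟨‖a‖, 0, norm_nonneg a, fun x => by simp⟩
  | add P Q hP hQ =>
    obtain ⟨C₁, m₁, hC₁, hP⟩ := hP
    obtain ⟨C₂, m₂, hC₂, hQ⟩ := hQ
    refine ⟨C₁ + C₂, max m₁ m₂, by positivity, fun x => ?_⟩
    calc ‖evalC (P + Q) x‖ ≤ ‖evalC P x‖ + ‖evalC Q x‖ := by
          rw [evalC_add]; exact norm_add_le _ _
      _ ≤ C₁ * Real.exp (max m₁ m₂ * ‖x‖) + C₂ * Real.exp (max m₁ m₂ * ‖x‖) := by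
          gcongr
          · exact (hP x).trans (by gcongr; exact le_max_left _ _)
          · exact (hQ x).trans (by gcongr; exact le_max_right _ _)
      _ = (C₁ + C₂) * Real.exp (max m₁ m₂ * ‖x‖) := by ring
  | mul_X P i hP =>
    obtain ⟨C, m, hC, hP⟩ := hP
    refine ⟨C, m + 1, hC, fun x => ?_⟩
    have hxi : ‖(x i : ℂ)‖ ≤ Real.exp ‖x‖ := by
      rw [Complex.norm_real]
      linarith [norm_le_pi_norm x i, Real.add_one_le_exp ‖x‖]
    calc ‖evalC (P * MvPolynomial.X i) x‖ = ‖evalC P x‖ * ‖(x i : ℂ)‖ := by simp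
      _ ≤ C * Real.exp (m * ‖x‖) * Real.exp ‖x‖ := by gcongr; exact hP x
      _ = C * Real.exp (↑(m + 1) * ‖x‖) := by
          rw [mul_assoc, ← Real.exp_add]; push_cast; ring_nf

/-- The weight `exp (-k ‖f k‖)` beats any growth `C exp (m ‖x‖)` once `k ≥ m`, so every
polynomial is integrable. -/
noncomputable def rapidDecayDiracSum (f : ℕ → Fin n → ℝ) : Measure (Fin n → ℝ) :=
  Measure.sum fun k => ENNReal.ofReal ((1 / 2) ^ k * Real.exp (-(k * ‖f k‖))) • Measure.dirac (f k)

lemma integrable_evalC_rapidDecayDiracSum (f : ℕ → Fin n → ℝ) (Q : MvPolynomial (Fin n) ℂ) :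
    Integrable (evalC Q) (rapidDecayDiracSum f) := by
  obtain ⟨C, m, hC, hQ⟩ := exists_norm_evalC_le_mul_exp Q
  refine integrable_sum_dirac (fun k => ENNReal.ofReal_ne_top) ?_
  refine (summable_geometric_two.mul_left C).of_norm_bounded_eventually_nat ?_
  filter_upwards [eventually_ge_atTop m] with k hk
  set t := ‖f k‖
  have hdecay : Real.exp (-(k * t)) * Real.exp (m * t) ≤ 1 := by
    rw [← Real.exp_add, Real.exp_le_one_iff]
    have : (m : ℝ) ≤ k := by exact_mod_cast hk
    nlinarith [norm_nonneg (f k)]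
  rw [ENNReal.toReal_ofReal (by positivity), Real.norm_of_nonneg (by positivity)]
  calc (1 / 2) ^ k * Real.exp (-(k * t)) * ‖evalC Q (f k)‖
      ≤ (1 / 2) ^ k * Real.exp (-(k * t)) * (C * Real.exp (m * t)) := by gcongr; exact hQ _
    _ = C * (1 / 2) ^ k * (Real.exp (-(k * t)) * Real.exp (m * t)) := by ring
    _ ≤ C * (1 / 2) ^ k := mul_le_of_le_one_right (by positivity) hdecay

lemma ae_rapidDecayDiracSum_iff {f : ℕ → Fin n → ℝ} {p : (Fin n → ℝ) → Prop} :
    (∀ᵐ x ∂rapidDecayDiracSum f, p x) ↔ ∀ k, p (f k) :=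
  ae_sum_smul_dirac_iff fun _ => (ENNReal.ofReal_pos.2 (by positivity)).ne'

noncomputable def integralFunctional (μ : Measure (Fin n → ℝ))
    (hμ : ∀ Q, Integrable (evalC Q) μ) : MvPolynomial (Fin n) ℂ →ₗ[ℂ] ℂ where
  toFun Q := ∫ x, evalC Q x ∂μ
  map_add' P Q := by simp only [evalC_add]; exact integral_add (hμ P) (hμ Q)
  map_smul' a Q := by simp only [evalC_smul, RingHom.id_apply]; exact integral_const_mul a _

lemma isMomentC_integralFunctional (μ : Measure (Fin n → ℝ))
    (hμ : ∀ Q, Integrable (evalC Q) μ) : IsMomentC (integralFunctional μ hμ) :=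
  ⟨μ, hμ, fun _ => rfl⟩

lemma mem_nSetC_integralFunctional_iff {μ : Measure (Fin n → ℝ)}
    {hμ : ∀ Q, Integrable (evalC Q) μ} {P : MvPolynomial (Fin n) ℂ} :
    P ∈ nSetC (integralFunctional μ hμ) ↔ ∀ᵐ x ∂μ, evalC P x = 0 := by
  have hint : Integrable (fun x => Complex.normSq (evalC P x)) μ := by
    simpa only [evalC_starC_mul_self, RCLike.re_to_complex, Complex.ofReal_re]
      using (hμ (starC P * P)).re
  change ∫ x, evalC (starC P * P) x ∂μ = 0 ↔ _
  simp_rw [funext (evalC_starC_mul_self P), integral_complex_ofReal, Complex.ofReal_eq_zero,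
    integral_eq_zero_iff_of_nonneg (fun x => Complex.normSq_nonneg _) hint, EventuallyEq,
    Pi.zero_apply, Complex.normSq_eq_zero]

lemma mem_vanishingIdealC {Z : Set (Fin n → ℝ)} {P : MvPolynomial (Fin n) ℂ} :
    P ∈ vanishingIdealC Z ↔ ∀ x ∈ Z, evalC P x = 0 :=
  Iff.rfl

lemma nonempty_of_vanishingIdealC_ne_top {Z : Set (Fin n → ℝ)} (h : vanishingIdealC Z ≠ ⊤) :
    Z.Nonempty := by
  rw [nonempty_iff_ne_empty]
  rintro rfl
  exact h ((Ideal.eq_top_iff_one _).2 fun x hx => hx.elim)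

lemma vanishingIdealC_eq_of_subset_closure {D Z : Set (Fin n → ℝ)} (hDZ : D ⊆ Z)
    (hZD : Z ⊆ closure D) : vanishingIdealC Z = vanishingIdealC D := by
  ext P
  refine ⟨fun hP x hx => hP x (hDZ hx), fun hP x hx => ?_⟩
  have hclosed : IsClosed {y | evalC P y = 0} := isClosed_eq (continuous_evalC P) continuous_const
  exact closure_minimal hP hclosed (hZD hx)

end

theorem stmt_17_general (n : ℕ) (I : Ideal (MvPolynomial (Fin n) ℂ))
    (hproper : I ≠ ⊤) (Z : Set (Fin n → ℝ)) (hI : I = vanishingIdealC Z) :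
    ∃ Λ : MvPolynomial (Fin n) ℂ →ₗ[ℂ] ℂ, IsMomentC Λ ∧
      nSetC Λ = (I : Set (MvPolynomial (Fin n) ℂ)) := by
  subst hI
  obtain ⟨f, hfZ, hZf⟩ := exists_range_subset_subset_closure_range
    (nonempty_of_vanishingIdealC_ne_top hproper)
  refine ⟨integralFunctional _ (integrable_evalC_rapidDecayDiracSum f),
    isMomentC_integralFunctional _ _, ?_⟩
  ext P
  rw [mem_nSetC_integralFunctional_iff, ae_rapidDecayDiracSum_iff, SetLike.mem_coe,
    vanishingIdealC_eq_of_subset_closure hfZ hZf, mem_vanishingIdealC, forall_mem_range]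

theorem stmt_17 (n : ℕ) (hn : 0 < n) (I : Ideal (MvPolynomial (Fin n) ℂ))
    (hproper : I ≠ ⊤) (Z : Set (Fin n → ℝ)) (hI : I = vanishingIdealC Z) :
    ∃ Λ : MvPolynomial (Fin n) ℂ →ₗ[ℂ] ℂ, IsMomentC Λ ∧
      nSetC Λ = (I : Set (MvPolynomial (Fin n) ℂ)) :=
  stmt_17_general n I hproper Z hI
end

section
/- Let I be the ideal of ℂ[X₁,…,Xₙ] generated by finitely many polynomials P₁,…,P_s ∈ ℂ[X₁,…,Xₙ], and set P := P₁*P₁ + ⋯ + P_s*P_s. Then for every positive definite linear functional Λ on ℂ[X₁,…,Xₙ], Λ vanishes on I if and only if Λ vanishes on the ideal (P) generated by P. -/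
open MeasureTheory
open scoped ComplexOrder

/-! For a positive functional `Λ`, the form `⟨a, b⟩ = Λ (star a * b)` is Hermitian and positive
semidefinite, so by Cauchy–Schwarz `Λ (star r * r) = 0` forces `Λ (q * r) = 0` for every `q`: the
elements `r` with `Λ (q * r) = 0` for all `q` form an ideal which contains every `r` with
`Λ (star r * r) = 0`. Since `Λ P = ∑ Λ (star Pᵢ * Pᵢ)` is a sum of nonnegative terms, `Λ P = 0`
puts every `Pᵢ` into that ideal, hence `Λ` vanishes on `I`. Conversely `P ∈ I`. -/

namespace MvPolynomial

variable {σ R : Type*} [CommSemiring R] [StarRing R]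

-- Coefficientwise conjugation; for it, `starC P` is `star P` by definition.
noncomputable instance instStarRing : StarRing (MvPolynomial σ R) where
  star := map (starRingEnd R)
  star_involutive P := by
    change map _ (map _ P) = P
    rw [map_map]
    convert map_id P
    ext c
    exact star_star c
  star_mul P Q := by
    change map _ (P * Q) = map _ Q * map _ P
    rw [map_mul, mul_comm]
  star_add := map_add _

lemma star_def (P : MvPolynomial σ R) : star P = map (starRingEnd R) P := rfl

instance : StarModule R (MvPolynomial σ R) where
  star_smul c P := by
    simp only [star_def, smul_eq_C_mul, map_mul, map_C, starRingEnd_apply]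

end MvPolynomial

namespace LinearMap

variable {R A M : Type*} [CommSemiring R] [Semiring A] [Module R A] [AddCommMonoid M] [Module R M]

def kerIdeal (Λ : A →ₗ[R] M) : Ideal A where
  carrier := {r | ∀ q, Λ (q * r) = 0}
  add_mem' ha hb q := by rw [mul_add, map_add, ha, hb, add_zero]
  zero_mem' q := by rw [mul_zero, map_zero]
  smul_mem' c r hr q := by rw [smul_eq_mul, ← mul_assoc, hr]

lemma map_eq_zero_of_mem_kerIdeal {Λ : A →ₗ[R] M} {r : A} (hr : r ∈ Λ.kerIdeal) : Λ r = 0 := by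
  simpa using hr 1

end LinearMap

section PositiveFunctional

open Complex ComplexConjugate

variable {A : Type*} [Ring A] [StarRing A] [Algebra ℂ A] {Λ : A →ₗ[ℂ] ℂ}

lemma im_map_add_map_star (hΛ : ∀ a, 0 ≤ Λ (star a * a)) (a : A) :
    (Λ a + Λ (star a)).im = 0 := by
  have h1 := (nonneg_iff.mp (hΛ 1)).2
  have ha := (nonneg_iff.mp (hΛ a)).2
  have h := (nonneg_iff.mp (hΛ (1 + a))).2
  have hexp : star (1 + a) * (1 + a) = star 1 * 1 + (a + star a) + star a * a := by
    simp only [star_add, star_one, add_mul, mul_add, one_mul, mul_one]; abel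
  rw [hexp, map_add, map_add, map_add, add_im, add_im] at h
  linarith

variable [StarModule ℂ A]

lemma map_star_of_nonneg (hΛ : ∀ a, 0 ≤ Λ (star a * a)) (a : A) :
    Λ (star a) = conj (Λ a) := by
  have him := im_map_add_map_star hΛ a
  have hre := im_map_add_map_star hΛ (I • a)
  rw [star_smul, map_smul, map_smul, smul_eq_mul, smul_eq_mul, Complex.star_def, conj_I] at hre
  simp only [add_im, mul_im, I_re, I_im, neg_re, neg_im] at him hre
  apply Complex.ext <;> simp only [conj_re, conj_im] <;> linarith

noncomputable abbrev starMulCore (Λ : A →ₗ[ℂ] ℂ) (hΛ : ∀ a, 0 ≤ Λ (star a * a)) :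
    PreInnerProductSpace.Core ℂ A where
  inner a b := Λ (star a * b)
  conj_inner_symm a b := by rw [← map_star_of_nonneg hΛ, star_mul, star_star]
  re_inner_nonneg a := (nonneg_iff.mp (hΛ a)).1
  add_left a b c := by rw [star_add, add_mul, map_add]
  smul_left a b c := by rw [star_smul, smul_mul_assoc, map_smul, smul_eq_mul]; rfl

lemma mem_kerIdeal_of_map_star_mul_self_eq_zero (hΛ : ∀ a, 0 ≤ Λ (star a * a)) {r : A}
    (hr : Λ (star r * r) = 0) : r ∈ Λ.kerIdeal := by
  intro q
  have h := InnerProductSpace.Core.inner_mul_inner_self_le (c := starMulCore Λ hΛ) (star q) r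
  rw [InnerProductSpace.Core.norm_inner_symm (c := starMulCore Λ hΛ) r] at h
  change ‖Λ (star (star q) * r)‖ * ‖Λ (star (star q) * r)‖ ≤ _ * (Λ (star r * r)).re at h
  rw [hr, zero_re, mul_zero, star_star] at h
  exact norm_eq_zero.mp (mul_self_eq_zero.mp (le_antisymm h (mul_self_nonneg _)))

end PositiveFunctional

theorem stmt_18_general (n : ℕ) (s : ℕ)
    (Pf : Fin s → MvPolynomial (Fin n) ℂ)
    (Λ : MvPolynomial (Fin n) ℂ →ₗ[ℂ] ℂ) (hΛ : IsPosDefC Λ) :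
    VanishesOnC Λ (Ideal.span (Set.range Pf)) ↔
      VanishesOnC Λ (Ideal.span {∑ i, starC (Pf i) * Pf i}) := by
  have hP : ∑ i, starC (Pf i) * Pf i ∈ Ideal.span (Set.range Pf) :=
    Ideal.sum_mem _ fun i _ => Ideal.mul_mem_left _ _ (Ideal.subset_span ⟨i, rfl⟩)
  refine ⟨fun hV Q hQ => hV Q ((Ideal.span_singleton_le_iff_mem _).mpr hP hQ), fun hV => ?_⟩
  have hsum : ∑ i, Λ (star (Pf i) * Pf i) = 0 := by
    rw [← map_sum]
    exact hV _ (Ideal.mem_span_singleton_self _)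
  have hnull := (Finset.sum_eq_zero_iff_of_nonneg fun i _ => hΛ (Pf i)).mp hsum
  have hle : Ideal.span (Set.range Pf) ≤ Λ.kerIdeal :=
    Ideal.span_le.mpr <| Set.range_subset_iff.mpr fun i =>
      mem_kerIdeal_of_map_star_mul_self_eq_zero hΛ (hnull i (Finset.mem_univ i))
  exact fun Q hQ => LinearMap.map_eq_zero_of_mem_kerIdeal (hle hQ)

theorem stmt_18 (n : ℕ) (hn : 0 < n) (s : ℕ)
    (Pf : Fin s → MvPolynomial (Fin n) ℂ)
    (Λ : MvPolynomial (Fin n) ℂ →ₗ[ℂ] ℂ) (hΛ : IsPosDefC Λ) :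
    VanishesOnC Λ (Ideal.span (Set.range Pf)) ↔
      VanishesOnC Λ (Ideal.span {∑ i, starC (Pf i) * Pf i}) :=
  stmt_18_general n s Pf Λ hΛ
end
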